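/- Let m, n ≥ 2 and let k divide r. The graph Γ^k_{m,n}(r) is isomorphic to the lexicographic product Γ^k_{m,n}(k)[complement of K_{r/k}], and consequently its independence number equals max{r, nr/k}. -/

import Mathlib

/-!
With `[r] = [k] × [s]` and the part index as first coordinate, adjacency in `Γ^k_{m,n}(r)` does
not look at the position inside a part, which is exactly the lexicographic product of
`Γ^k_{m,n}(k)` with the edgeless graph on `[s]`. A coclique of `X[K̄_s]` lies in the product of its
projection (a coclique of `X`) with `[s]`, and `C × [s]` is a coclique whenever `C` is, so
`α(X[K̄_s]) = α(X) · s`. In `Γ^k_{m,n}(k)` a coclique inside a single layer `c` has constant `b`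
and injects into `[k]`; one meeting two layers is forced to have constant `a`, so `b` is then
determined by `c` and it injects into `[n]`. Rows and columns attain `k` and `n`.
-/

/-- A set of vertices is a coclique (independent set) of a graph. -/
def IsCoclique {V : Type*} (G : SimpleGraph V) (s : Set V) : Prop :=
  ∀ ⦃a⦄, a ∈ s → ∀ ⦃b⦄, b ∈ s → ¬ G.Adj a b

/-- The independence number of a graph: the maximum size of a coclique. -/
noncomputable def indepNum {V : Type*} [Fintype V] (G : SimpleGraph V) : ℕ :=
  sSup {n | ∃ s : Finset V, IsCoclique G ↑s ∧ s.card = n}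

/-- The lexicographic product `X[Y]` of two graphs: `(x,y) ~ (x',y')` iff
`x ~ x'` in `X`, or `x = x'` and `y ~ y'` in `Y`. -/
def lexProd {V W : Type*} (X : SimpleGraph V) (Y : SimpleGraph W) :
    SimpleGraph (V × W) where
  Adj a b := X.Adj a.1 b.1 ∨ (a.1 = b.1 ∧ Y.Adj a.2 b.2)
  symm := by
    constructor
    intro a b h
    rcases h with h | ⟨h1, h2⟩
    · exact Or.inl h.symm
    · exact Or.inr ⟨h1.symm, h2.symm⟩
  loopless := by
    constructor
    intro a h
    rcases h with h | ⟨_, h2⟩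
    · exact X.loopless.irrefl _ h
    · exact Y.loopless.irrefl _ h2

/-- The graph `Γ^k_{m,n}(r)` with `r = k·s`: elements of `[r]` are encoded as pairs
`(a₁, a₂) ∈ [k] × [s]`, with the uniform partition into the `k` parts given by the
first coordinate.  `(a,b,c) ~ (a',b',c')` iff (`c = c'` and `b ≠ b'`) or
(`c ≠ c'` and `a`, `a'` lie in different parts). -/
def GammaR (k s m n : ℕ) : SimpleGraph ((Fin k × Fin s) × Fin m × Fin n) where
  Adj v w := (v.2.2 = w.2.2 ∧ v.2.1 ≠ w.2.1) ∨ (v.2.2 ≠ w.2.2 ∧ v.1.1 ≠ w.1.1)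
  symm := by
    constructor
    intro v w h
    rcases h with ⟨h1, h2⟩ | ⟨h1, h2⟩
    · exact Or.inl ⟨h1.symm, h2.symm⟩
    · exact Or.inr ⟨fun he => h1 he.symm, fun he => h2 he.symm⟩
  loopless := by
    constructor
    intro v h
    rcases h with ⟨_, h2⟩ | ⟨h1, _⟩
    · exact h2 rfl
    · exact h1 rfl

/-- The graph `Γ^k_{m,n}(k)` (partition of `[k]` into singletons). -/
def Gamma (k m n : ℕ) : SimpleGraph (Fin k × Fin m × Fin n) where
  Adj v w := (v.2.2 = w.2.2 ∧ v.2.1 ≠ w.2.1) ∨ (v.2.2 ≠ w.2.2 ∧ v.1 ≠ w.1)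
  symm := by
    constructor
    intro v w h
    rcases h with ⟨h1, h2⟩ | ⟨h1, h2⟩
    · exact Or.inl ⟨h1.symm, h2.symm⟩
    · exact Or.inr ⟨fun he => h1 he.symm, fun he => h2 he.symm⟩
  loopless := by
    constructor
    intro v h
    rcases h with ⟨_, h2⟩ | ⟨h1, _⟩
    · exact h2 rfl
    · exact h1 rfl

namespace SimpleGraph

variable {V W : Type*}

theorem IsIndepSet.not_adj {G : SimpleGraph V} {s : Set V} (hs : G.IsIndepSet s) {v w : V}
    (hv : v ∈ s) (hw : w ∈ s) : ¬G.Adj v w :=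
  fun hadj => hs hv hw (G.ne_of_adj hadj) hadj

theorem IsIndepSet.map {G : SimpleGraph V} {H : SimpleGraph W} (f : G ↪g H) {s : Finset V}
    (hs : G.IsIndepSet s) : H.IsIndepSet (s.map f.toEmbedding) := by
  rw [Finset.coe_map]
  rintro _ ⟨v, hv, rfl⟩ _ ⟨w, hw, rfl⟩ hne
  rw [RelEmbedding.coe_toEmbedding, f.map_adj_iff]
  exact hs hv hw (ne_of_apply_ne f hne)

theorem Embedding.indepNum_le [Finite W] {G : SimpleGraph V} {H : SimpleGraph W}
    (f : G ↪g H) : G.indepNum ≤ H.indepNum := by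
  obtain ⟨s, hs⟩ := G.exists_isNIndepSet_indepNum
  simpa [hs.card_eq] using (hs.isIndepSet.map f).card_le_indepNum

theorem Iso.indepNum_eq [Finite V] [Finite W] {G : SimpleGraph V} {H : SimpleGraph W}
    (e : G ≃g H) : G.indepNum = H.indepNum :=
  le_antisymm e.toEmbedding.indepNum_le e.symm.toEmbedding.indepNum_le

end SimpleGraph

theorem isCoclique_iff_isIndepSet {V : Type*} (G : SimpleGraph V) (s : Set V) :
    IsCoclique G s ↔ G.IsIndepSet s :=
  ⟨fun h _ ha _ hb _ => h ha hb, fun h _ ha _ hb => h.not_adj ha hb⟩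

theorem indepNum_eq_simpleGraph_indepNum {V : Type*} [Fintype V] (G : SimpleGraph V) :
    indepNum G = G.indepNum := by
  simp only [indepNum, SimpleGraph.indepNum, isCoclique_iff_isIndepSet,
    SimpleGraph.isNIndepSet_iff]

section LexProd

variable {V W : Type*} {X : SimpleGraph V}

theorem isIndepSet_image_fst_of_lexProd_bot {S : Set (V × W)}
    (hS : (lexProd X ⊥).IsIndepSet S) : X.IsIndepSet (Prod.fst '' S) := by
  rintro _ ⟨p, hp, rfl⟩ _ ⟨q, hq, rfl⟩ hne hadj
  exact hS hp hq (ne_of_apply_ne Prod.fst hne) (Or.inl hadj)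

theorem isIndepSet_prod_univ_lexProd_bot {C : Set V} (hC : X.IsIndepSet C) :
    (lexProd X (⊥ : SimpleGraph W)).IsIndepSet (C ×ˢ Set.univ) := by
  rintro p ⟨hp, -⟩ q ⟨hq, -⟩ hne (hadj | ⟨-, hbot⟩)
  · exact hC hp hq (X.ne_of_adj hadj) hadj
  · exact hbot

theorem indepNum_lexProd_bot [Finite V] [Fintype W] :
    (lexProd X (⊥ : SimpleGraph W)).indepNum = X.indepNum * Fintype.card W := by
  classical
  apply le_antisymm
  · obtain ⟨S, hS⟩ := (lexProd X (⊥ : SimpleGraph W)).exists_isNIndepSet_indepNum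
    have hfst : X.IsIndepSet (S.image Prod.fst : Finset V) := by
      rw [Finset.coe_image]
      exact isIndepSet_image_fst_of_lexProd_bot hS.isIndepSet
    calc (lexProd X ⊥).indepNum = S.card := hS.card_eq.symm
      _ ≤ (S.image Prod.fst ×ˢ Finset.univ).card :=
        Finset.card_le_card fun p hp => Finset.mem_product.2
          ⟨Finset.mem_image_of_mem _ hp, Finset.mem_univ _⟩
      _ ≤ X.indepNum * Fintype.card W := by
        rw [Finset.card_product, Finset.card_univ]
        exact Nat.mul_le_mul_right _ hfst.card_le_indepNum
  · obtain ⟨C, hC⟩ := X.exists_isNIndepSet_indepNum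
    have hprod : (lexProd X (⊥ : SimpleGraph W)).IsIndepSet ↑(C ×ˢ (Finset.univ : Finset W)) := by
      rw [Finset.coe_product, Finset.coe_univ]
      exact isIndepSet_prod_univ_lexProd_bot hC.isIndepSet
    simpa [hC.card_eq] using hprod.card_le_indepNum

end LexProd

section Gamma

variable {k m n : ℕ}

theorem gamma_not_adj_iff {v w : Fin k × Fin m × Fin n} :
    ¬(Gamma k m n).Adj v w ↔ (v.2.2 = w.2.2 → v.2.1 = w.2.1) ∧ (v.2.2 ≠ w.2.2 → v.1 = w.1) := by
  simp only [Gamma, not_or, not_and, not_not]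

theorem gamma_isIndepSet_injOn_fst {S : Set (Fin k × Fin m × Fin n)}
    (hS : (Gamma k m n).IsIndepSet S) (hc : ∀ v ∈ S, ∀ w ∈ S, v.2.2 = w.2.2) :
    S.InjOn Prod.fst := by
  intro v hv w hw ha
  have hvw := hc v hv w hw
  exact Prod.ext ha (Prod.ext ((gamma_not_adj_iff.1 (hS.not_adj hv hw)).1 hvw) hvw)

theorem gamma_isIndepSet_injOn_snd_snd {S : Set (Fin k × Fin m × Fin n)}
    (hS : (Gamma k m n).IsIndepSet S) {v₀ w₀ : Fin k × Fin m × Fin n} (hv₀ : v₀ ∈ S)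
    (hw₀ : w₀ ∈ S) (hc₀ : v₀.2.2 ≠ w₀.2.2) : S.InjOn fun v => v.2.2 := by
  have hfst : ∀ u ∈ S, u.1 = v₀.1 := by
    intro u hu
    by_cases hu₀ : u.2.2 = v₀.2.2
    · rw [(gamma_not_adj_iff.1 (hS.not_adj hu hw₀)).2 (hu₀ ▸ hc₀),
        (gamma_not_adj_iff.1 (hS.not_adj hv₀ hw₀)).2 hc₀]
    · exact (gamma_not_adj_iff.1 (hS.not_adj hu hv₀)).2 hu₀
  intro v hv w hw hc
  exact Prod.ext ((hfst v hv).trans (hfst w hw).symm)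
    (Prod.ext ((gamma_not_adj_iff.1 (hS.not_adj hv hw)).1 hc) hc)

theorem gamma_isIndepSet_card_le {S : Finset (Fin k × Fin m × Fin n)}
    (hS : (Gamma k m n).IsIndepSet S) : S.card ≤ max k n := by
  by_cases hc : ∀ v ∈ S, ∀ w ∈ S, v.2.2 = w.2.2
  · calc S.card ≤ (Finset.univ : Finset (Fin k)).card :=
          Finset.card_le_card_of_injOn _ (fun _ _ => Finset.mem_univ _)
            (gamma_isIndepSet_injOn_fst hS hc)
      _ ≤ max k n := by simp
  · push Not at hc
    obtain ⟨v₀, hv₀, w₀, hw₀, hc₀⟩ := hc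
    calc S.card ≤ (Finset.univ : Finset (Fin n)).card :=
          Finset.card_le_card_of_injOn _ (fun _ _ => Finset.mem_univ _)
            (gamma_isIndepSet_injOn_snd_snd hS hv₀ hw₀ hc₀)
      _ ≤ max k n := by simp

theorem le_indepNum_gamma_of_row (b : Fin m) (c : Fin n) : k ≤ (Gamma k m n).indepNum := by
  let row : Fin k ↪ Fin k × Fin m × Fin n :=
    ⟨fun a => (a, b, c), fun _ _ h => congrArg Prod.fst h⟩
  have hrow : (Gamma k m n).IsIndepSet ↑(Finset.univ.map row) := by
    rw [Finset.coe_map]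
    rintro _ ⟨a, -, rfl⟩ _ ⟨a', -, rfl⟩ - (⟨-, hb⟩ | ⟨hc, -⟩)
    · exact hb rfl
    · exact hc rfl
  simpa using hrow.card_le_indepNum

theorem le_indepNum_gamma_of_column (a : Fin k) (b : Fin m) : n ≤ (Gamma k m n).indepNum := by
  let column : Fin n ↪ Fin k × Fin m × Fin n :=
    ⟨fun c => (a, b, c), fun _ _ h => congrArg (fun v => v.2.2) h⟩
  have hcolumn : (Gamma k m n).IsIndepSet ↑(Finset.univ.map column) := by
    rw [Finset.coe_map]
    rintro _ ⟨c, -, rfl⟩ _ ⟨c', -, rfl⟩ - (⟨-, hb⟩ | ⟨-, ha⟩)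
    · exact hb rfl
    · exact ha rfl
  simpa using hcolumn.card_le_indepNum

theorem indepNum_gamma (hk : 0 < k) (hm : 0 < m) (hn : 0 < n) :
    (Gamma k m n).indepNum = max k n := by
  apply le_antisymm
  · obtain ⟨S, hS⟩ := (Gamma k m n).exists_isNIndepSet_indepNum
    exact hS.card_eq ▸ gamma_isIndepSet_card_le hS.isIndepSet
  · exact max_le (le_indepNum_gamma_of_row ⟨0, hm⟩ ⟨0, hn⟩)
      (le_indepNum_gamma_of_column ⟨0, hk⟩ ⟨0, hm⟩)

end Gamma

def gammaRIsoLexProd (k s m n : ℕ) :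
    GammaR k s m n ≃g lexProd (Gamma k m n) (⊥ : SimpleGraph (Fin s)) where
  toFun v := ((v.1.1, v.2), v.1.2)
  invFun w := ((w.1.1, w.2), w.1.2)
  left_inv _ := rfl
  right_inv _ := rfl
  map_rel_iff' := by
    simp only [Equiv.coe_fn_mk, lexProd, Gamma, GammaR, SimpleGraph.bot_adj, Prod.mk.injEq]
    tauto

theorem gammaR_iso_lexProd_and_indepNum_general (k s m n : ℕ)
    (hk : 1 ≤ k) (hm : 2 ≤ m) (hn : 2 ≤ n) :
    Nonempty (GammaR k s m n ≃g lexProd (Gamma k m n) (⊥ : SimpleGraph (Fin s))) ∧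
      indepNum (GammaR k s m n) = max (k * s) (n * s) := by
  refine ⟨⟨gammaRIsoLexProd k s m n⟩, ?_⟩
  rw [indepNum_eq_simpleGraph_indepNum, (gammaRIsoLexProd k s m n).indepNum_eq,
    indepNum_lexProd_bot, indepNum_gamma (by omega) (by omega) (by omega), Fintype.card_fin,
    max_mul_mul_right]

/-- `Γ^k_{m,n}(r) ≅ Γ^k_{m,n}(k)[complement of K_{r/k}]`, and consequently its
independence number is `max {r, nr/k}` (here `r = k·s`, so this is
`max {k·s, n·s}`). -/
theorem gammaR_iso_lexProd_and_indepNum (k s m n : ℕ)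
    (hk : 1 ≤ k) (hs : 1 ≤ s) (hm : 2 ≤ m) (hn : 2 ≤ n) :
    Nonempty (GammaR k s m n ≃g lexProd (Gamma k m n) (⊥ : SimpleGraph (Fin s))) ∧
      indepNum (GammaR k s m n) = max (k * s) (n * s) :=
  gammaR_iso_lexProd_and_indepNum_general k s m n hk hm hn
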